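/- Fix ε > 0 and suppose that for all n ≥ 6, pₙ < n·((1+ε)·ln n − 1 − ln ε). Let W be the principal Lambert W function (W(y)·e^{W(y)} = y, W(y) > 0 for y > 0). Then for all real x ≥ 11, π(x) > (x/(1+ε)) / W((x/(1+ε))·(ε·e)^{−1/(1+ε)}) − 1. -/

import Mathlib

/-! With `t = π(x)` we have `x < p_{t+1}`, so the hypothesis at `N = t + 1` gives, for
`α = (ε e)^{-1/(1+ε)}`, the bound `x / (1 + ε) < N log (N α)`. Putting `u = x / (1 + ε)` and
`z = W(u α)`, this says `e^z log e^z = u α < N α log (N α)`, hence `e^z < N α` by monotonicity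
of `s ↦ s log s` on `[1, ∞)`, i.e. `u / z = e^z / α < N = π(x) + 1`. -/

noncomputable def nthPrime (n : ℕ) : ℕ := Nat.nth Nat.Prime (n - 1)
noncomputable def primePi (x : ℝ) : ℕ := Nat.primeCounting ⌊x⌋₊

open Real

lemma lt_of_mul_log_lt_mul_log {w s : ℝ} (hw : 1 ≤ w) (hs : 0 < s)
    (h : w * log w < s * log s) : w < s := by
  by_contra! hsw
  have hlw : 0 ≤ log w := log_nonneg hw
  rcases le_or_gt s 1 with hs1 | hs1
  · nlinarith [log_nonpos hs.le hs1]
  · nlinarith [log_pos hs1, log_le_log hs hsw]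

lemma div_lt_of_mul_exp_eq_of_lt_mul_log {y z c : ℝ} (hz : 0 < z) (hc : 0 < c)
    (hzy : z * exp z = y) (hy : y < c * log c) : y / z < c := by
  have hexp : exp z < c := by
    refine lt_of_mul_log_lt_mul_log (one_le_exp hz.le) hc ?_
    rwa [log_exp, mul_comm, hzy]
  rwa [← hzy, mul_div_cancel_left₀ _ hz.ne']

lemma lt_nthPrime_primePi_add_one (x : ℝ) : x < nthPrime (primePi x + 1) := by
  have hnth : ⌊x⌋₊ + 1 ≤ nthPrime (primePi x + 1) := by
    simpa [nthPrime, primePi, Nat.primeCounting, Nat.primeCounting'] using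
      Nat.le_nth_count Nat.infinite_setOfPred_prime (⌊x⌋₊ + 1)
  calc x < (⌊x⌋₊ : ℝ) + 1 := Nat.lt_floor_add_one x
    _ ≤ nthPrime (primePi x + 1) := by exact_mod_cast hnth

lemma five_le_primePi {x : ℝ} (hx : 11 ≤ x) : 5 ≤ primePi x :=
  calc 5 = Nat.primeCounting 11 := by decide
    _ ≤ primePi x := Nat.monotone_primeCounting (Nat.le_floor (by exact_mod_cast hx))

lemma log_rpow_neg_inv_one_add {ε : ℝ} (hε : 0 < ε) :
    log ((ε * exp 1) ^ (-(1 : ℝ) / (1 + ε))) = -(log ε + 1) / (1 + ε) := by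
  rw [log_rpow (by positivity), log_mul hε.ne' (exp_pos 1).ne', log_exp]
  ring

lemma div_one_add_lt_mul_log_mul_rpow {ε x N : ℝ} (hε : 0 < ε) (hN : 0 < N)
    (hx : x < N * ((1 + ε) * log N - 1 - log ε)) :
    x / (1 + ε) < N * log (N * (ε * exp 1) ^ (-(1 : ℝ) / (1 + ε))) := by
  rw [log_mul hN.ne' (by positivity), log_rpow_neg_inv_one_add hε, div_lt_iff₀ (by positivity)]
  refine hx.trans_eq ?_
  field_simp
  ring

theorem primePi_gt_W_bound (ε : ℝ) (hε : 0 < ε)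
    (hp : ∀ n : ℕ, 6 ≤ n →
      (nthPrime n : ℝ) < n * ((1 + ε) * Real.log n - 1 - Real.log ε))
    (W : ℝ → ℝ)
    (hW : ∀ y : ℝ, 0 < y → W y * Real.exp (W y) = y ∧ 0 < W y) :
    ∀ x : ℝ, 11 ≤ x →
      (x / (1 + ε)) /
        W ((x / (1 + ε)) * (ε * Real.exp 1) ^ (-(1 : ℝ) / (1 + ε))) - 1
        < (primePi x : ℝ) := by
  intro x hx
  set N : ℕ := primePi x + 1 with hN
  set α : ℝ := (ε * exp 1) ^ (-(1 : ℝ) / (1 + ε))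
  set u : ℝ := x / (1 + ε)
  have hα : 0 < α := by positivity
  have hN0 : (0 : ℝ) < N := by positivity
  have hxN : x < N * ((1 + ε) * log N - 1 - log ε) :=
    (lt_nthPrime_primePi_add_one x).trans (hp N (by have := five_le_primePi hx; omega))
  have hu : u * α < N * α * log (N * α) := by
    rw [mul_right_comm]
    exact mul_lt_mul_of_pos_right (div_one_add_lt_mul_log_mul_rpow hε hN0 hxN) hα
  obtain ⟨hWeq, hW0⟩ := hW (u * α) (by positivity)
  have huW : u * α / W (u * α) < N * α :=
    div_lt_of_mul_exp_eq_of_lt_mul_log hW0 (by positivity) hWeq hu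
  rw [mul_div_right_comm] at huW
  have := lt_of_mul_lt_mul_right huW hα.le
  push_cast [hN] at this
  linarith
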